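/- Define f : ℝ → ℝ by f(x) = 1 for x ∈ (0,1], f(x) = 2 for x ∈ (1,2), and f(x) = 0 otherwise. Then f is quasiconcave in ℝ, but for every function F admissible on [0,2], f is not F-concave in ℝ. -/
import Mathlib

open Set

noncomputable def f17 : ℝ → ℝ := fun x =>
  if 0 < x ∧ x ≤ 1 then 1 else if 1 < x ∧ x < 2 then 2 else 0

lemma comb_lt (a x y μ : ℝ) (hμ0 : 0 ≤ μ) (hμ1 : μ ≤ 1)
    (hx : a < x) (hy : a < y) : a < (1 - μ) * x + μ * y := by
  rcases eq_or_lt_of_le hμ0 with h | h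
  · simp [← h, hx]
  · nlinarith [mul_pos h (show (0:ℝ) < y - a by linarith),
      mul_nonneg (show (0:ℝ) ≤ 1 - μ by linarith) (show (0:ℝ) ≤ x - a by linarith)]

lemma comb_gt (b x y μ : ℝ) (hμ0 : 0 ≤ μ) (hμ1 : μ ≤ 1)
    (hx : x < b) (hy : y < b) : (1 - μ) * x + μ * y < b := by
  have := comb_lt (-b) (-x) (-y) μ hμ0 hμ1 (by linarith) (by linarith)
  linarith

lemma f17_nonneg (x : ℝ) : 0 ≤ f17 x := by
  unfold f17; split_ifs <;> norm_num

lemma f17_one_le (x : ℝ) (h0 : 0 < x) (h2 : x < 2) : 1 ≤ f17 x := by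
  unfold f17; split_ifs with h1 h3
  · norm_num
  · norm_num
  · push_neg at h1 h3
    linarith [h1 h0, h3 (h1 h0)]

lemma f17_two (x : ℝ) (h1 : 1 < x) (h2 : x < 2) : f17 x = 2 := by
  unfold f17
  rw [if_neg (by rintro ⟨_, h⟩; linarith), if_pos ⟨h1, h2⟩]

lemma f17_zero (x : ℝ) (h : ¬ (0 < x ∧ x < 2)) : f17 x = 0 := by
  push_neg at h
  unfold f17
  rw [if_neg (by rintro ⟨h0, h1⟩; linarith [h h0]),
      if_neg (by rintro ⟨h0, h1⟩; linarith [h (by linarith)])]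

lemma f17_one (x : ℝ) (h0 : 0 < x) (h1 : x ≤ 1) : f17 x = 1 := by
  unfold f17; rw [if_pos ⟨h0, h1⟩]

/-- `f17` is quasiconcave in `ℝ`, but it is not `F`-concave in `ℝ` for any admissible `F`
on `[0,2]`. -/
theorem stmt_17 :
    (∀ x y : ℝ, ∀ μ ∈ Set.Icc (0 : ℝ) 1,
      min (f17 x) (f17 y) ≤ f17 ((1 - μ) * x + μ * y)) ∧
    ∀ F : ℝ → EReal, ContinuousOn F (Ioo (0 : ℝ) 2) → StrictMonoOn F (Icc (0 : ℝ) 2) →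
      ¬ (∀ x y : ℝ, ∀ μ ∈ Set.Icc (0 : ℝ) 1,
          ((1 - μ : ℝ) : EReal) * F (f17 x) + ((μ : ℝ) : EReal) * F (f17 y)
            ≤ F (f17 ((1 - μ) * x + μ * y))) := by
  constructor
  · intro x y μ hμ
    obtain ⟨hμ0, hμ1⟩ := hμ
    by_cases hx : 0 < x ∧ x < 2
    · by_cases hy : 0 < y ∧ y < 2
      · have hz0 : 0 < (1 - μ) * x + μ * y := comb_lt 0 x y μ hμ0 hμ1 hx.1 hy.1
        have hz2 : (1 - μ) * x + μ * y < 2 := comb_gt 2 x y μ hμ0 hμ1 hx.2 hy.2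
        by_cases hx1 : 1 < x
        · by_cases hy1 : 1 < y
          · have h1 : 1 < (1 - μ) * x + μ * y := comb_lt 1 x y μ hμ0 hμ1 hx1 hy1
            rw [f17_two x hx1 hx.2, f17_two y hy1 hy.2, f17_two _ h1 hz2]
            norm_num
          · push_neg at hy1
            calc min (f17 x) (f17 y) ≤ f17 y := min_le_right _ _
              _ ≤ f17 ((1 - μ) * x + μ * y) := by rw [f17_one y hy.1 hy1]; exact f17_one_le _ hz0 hz2
        · push_neg at hx1
          calc min (f17 x) (f17 y) ≤ f17 x := min_le_left _ _
            _ ≤ f17 ((1 - μ) * x + μ * y) := by rw [f17_one x hx.1 hx1]; exact f17_one_le _ hz0 hz2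
      · calc min (f17 x) (f17 y) ≤ f17 y := min_le_right _ _
          _ = 0 := f17_zero y hy
          _ ≤ f17 ((1 - μ) * x + μ * y) := f17_nonneg _
    · calc min (f17 x) (f17 y) ≤ f17 x := min_le_left _ _
        _ = 0 := f17_zero x hx
        _ ≤ f17 ((1 - μ) * x + μ * y) := f17_nonneg _
  · intro F hcont hmono hcc
    have h01 : F 0 < F 1 := hmono (by constructor <;> norm_num)
      (by constructor <;> norm_num) (by norm_num)
    have h12 : F 1 < F 2 := hmono (by constructor <;> norm_num)
      (by constructor <;> norm_num) (by norm_num)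
    have key := hcc (1/2) (3/2) (1/2) (by constructor <;> norm_num)
    have e1 : (1 - 1/2) * (1/2 : ℝ) + (1/2) * (3/2) = 1 := by norm_num
    rw [e1, f17_one (1/2) (by norm_num) (by norm_num),
        f17_two (3/2) (by norm_num) (by norm_num),
        f17_one 1 (by norm_num) (by norm_num)] at key
    have hne_bot : F 1 ≠ ⊥ := (bot_le.trans_lt h01).ne'
    have hne_top : F 1 ≠ ⊤ := (h12.trans_le le_top).ne
    obtain ⟨r, hr⟩ : ∃ r : ℝ, F 1 = (r : EReal) :=
      ⟨(F 1).toReal, (EReal.coe_toReal hne_top hne_bot).symm⟩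
    rcases eq_or_ne (F 2) ⊤ with h2t | h2t
    · rw [hr, h2t] at key
      have : ((1 - 1/2 : ℝ) : EReal) * (r : EReal) + ((1/2 : ℝ) : EReal) * ⊤ = ⊤ := by
        rw [EReal.mul_top_of_pos (by norm_num), ← EReal.coe_mul, EReal.coe_add_top]
      rw [this] at key
      exact (EReal.coe_lt_top r).not_ge key
    · have h2b : F 2 ≠ ⊥ := (bot_le.trans_lt (h01.trans h12)).ne'
      obtain ⟨s, hs⟩ : ∃ s : ℝ, F 2 = (s : EReal) :=
        ⟨(F 2).toReal, (EReal.coe_toReal h2t h2b).symm⟩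
      rw [hr, hs] at key h12
      rw [← EReal.coe_mul, ← EReal.coe_mul, ← EReal.coe_add] at key
      rw [EReal.coe_le_coe_iff] at key
      rw [EReal.coe_lt_coe_iff] at h12
      linarith
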